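/- arXiv:2206.14248 — 4 statements merged into one kernel-verified Lean document; each statement's English description precedes it below -/
import Mathlib

section
/- Let q ≥ 0, P ≥ 0, c ≥ 0 and t² > 0 be real numbers with D = P·q + c + t², and define e(v) = v²·D − 2·v·√(P·q) + 1 for v ∈ ℝ. Then the infimum over v ∈ ℝ and d ∈ (0, ∞) of d·e(v) − ln(d) equals 1 − ln(1 + γ), where γ = P·q/(c + t²), and it is attained at v* = √(P·q)/D and d* = 1 + γ. -/
/-!
Completing the square, `v ↦ v²D − 2vs + 1` is minimised at `v = s / D` with value
`1 − s² / D`, which for `s = √(Pq)` equals `1 / (1 + γ)`. For fixed `m > 0`, the inequality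
`log (d m) ≤ d m − 1` shows that `d ↦ d m − log d` is minimised at `d = 1 / m` with value
`1 + log m`. Composing the two minimisations gives `1 − log (1 + γ)`.
-/

open Real

lemma one_sub_sq_div_le_quadratic {D : ℝ} (hD : 0 < D) (s v : ℝ) :
    1 - s ^ 2 / D ≤ v ^ 2 * D - 2 * v * s + 1 := by
  have key : v ^ 2 * D - 2 * v * s + 1 = D * (v - s / D) ^ 2 + (1 - s ^ 2 / D) := by
    field_simp
    ring
  rw [key]
  exact le_add_of_nonneg_left (by positivity)

lemma quadratic_at_div {D : ℝ} (hD : D ≠ 0) (s : ℝ) :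
    (s / D) ^ 2 * D - 2 * (s / D) * s + 1 = 1 - s ^ 2 / D := by
  field_simp
  ring

lemma one_add_log_le_mul_sub_log {m d : ℝ} (hm : 0 < m) (hd : 0 < d) :
    1 + log m ≤ d * m - log d := by
  have := log_le_sub_one_of_pos (mul_pos hd hm)
  rw [log_mul hd.ne' hm.ne'] at this
  linarith

lemma isLeast_mul_sub_log {α : Type*} {e : α → ℝ} {m : ℝ} (hm : 0 < m)
    (hle : ∀ v, m ≤ e v) (hattain : ∃ v, e v = m) :
    IsLeast {x : ℝ | ∃ v d, 0 < d ∧ x = d * e v - log d} (1 + log m) := by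
  obtain ⟨v₀, hv₀⟩ := hattain
  refine ⟨⟨v₀, m⁻¹, inv_pos.2 hm, ?_⟩, ?_⟩
  · rw [hv₀, inv_mul_cancel₀ hm.ne', log_inv]
    ring
  · rintro x ⟨v, d, hd, rfl⟩
    calc 1 + log m ≤ d * m - log d := one_add_log_le_mul_sub_log hm hd
      _ ≤ d * e v - log d := by gcongr; exact hle v

/-- Equivalence of (P5) and (P6): with e(v) = v²·D − 2·v·√(P·q) + 1,
D = P·q + c + t², γ = P·q/(c + t²), the infimum over v ∈ ℝ and d > 0 of
d·e(v) − ln d equals 1 − ln(1 + γ), attained at v* = √(P·q)/D, d* = 1 + γ. -/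
theorem stmt_7 (q P c t2 : ℝ) (hq : 0 ≤ q) (hP : 0 ≤ P) (hc : 0 ≤ c) (ht : 0 < t2) :
    IsLeast
      {x : ℝ | ∃ v d : ℝ, 0 < d ∧
        x = d * (v ^ 2 * (P * q + c + t2) - 2 * v * Real.sqrt (P * q) + 1) - Real.log d}
      (1 - Real.log (1 + P * q / (c + t2))) ∧
    (1 + P * q / (c + t2)) *
        ((Real.sqrt (P * q) / (P * q + c + t2)) ^ 2 * (P * q + c + t2)
          - 2 * (Real.sqrt (P * q) / (P * q + c + t2)) * Real.sqrt (P * q) + 1)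
        - Real.log (1 + P * q / (c + t2))
      = 1 - Real.log (1 + P * q / (c + t2)) := by
  have hPq : 0 ≤ P * q := mul_nonneg hP hq
  have hn : 0 < c + t2 := by linarith
  have hD : 0 < P * q + c + t2 := by linarith
  have hγ : 0 < 1 + P * q / (c + t2) := by positivity
  have hmin : 1 - sqrt (P * q) ^ 2 / (P * q + c + t2) = (1 + P * q / (c + t2))⁻¹ := by
    rw [sq_sqrt hPq]
    field_simp
    ring
  have hattain := quadratic_at_div hD.ne' (sqrt (P * q))
  rw [hmin] at hattain
  have hle (v : ℝ) :
      (1 + P * q / (c + t2))⁻¹ ≤ v ^ 2 * (P * q + c + t2) - 2 * v * sqrt (P * q) + 1 :=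
    hmin ▸ one_sub_sq_div_le_quadratic hD _ v
  refine ⟨?_, ?_⟩
  · have h := isLeast_mul_sub_log (inv_pos.2 hγ) hle ⟨_, hattain⟩
    rwa [log_inv, ← sub_eq_add_neg] at h
  · rw [hattain, mul_inv_cancel₀ hγ.ne']
end

section
/- Let n be a positive integer, R an n×n Hermitian positive semidefinite complex matrix, and α > 0, c > 0 real numbers. For δ ≥ 0 define f(δ) = (1/n)·tr(R·((c/(1+δ))·R + α·I_n)⁻¹), where the matrix (c/(1+δ))·R + α·I_n is positive definite, hence invertible. Then there exists a unique δ ≥ 0 satisfying δ = f(δ). -/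
open Matrix ComplexOrder

theorem trace_formula (n : ℕ) (R : Matrix (Fin n) (Fin n) ℂ) (hR : R.PosSemidef)
    (t α : ℝ) (ht : 0 ≤ t) (hα : 0 < α) :
    (R * (t • R + α • (1 : Matrix (Fin n) (Fin n) ℂ))⁻¹).trace
      = ∑ i, (((hR.1.eigenvalues i * (t * hR.1.eigenvalues i + α)⁻¹ : ℝ)) : ℂ) := by
  classical
  set U : Matrix (Fin n) (Fin n) ℂ := (hR.1.eigenvectorUnitary : Matrix (Fin n) (Fin n) ℂ) with hU
  have hUU : U * star U = 1 := (Matrix.mem_unitaryGroup_iff).mp hR.1.eigenvectorUnitary.2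
  have hUU' : star U * U = 1 := (Matrix.mem_unitaryGroup_iff').mp hR.1.eigenvectorUnitary.2
  set lam := hR.1.eigenvalues with hlam
  have hspec : R = U * diagonal (RCLike.ofReal ∘ lam) * star U := hR.1.spectral_theorem
  have hden : ∀ i, (0:ℝ) < t * lam i + α := fun i =>
    add_pos_of_nonneg_of_pos (mul_nonneg ht (hR.eigenvalues_nonneg i)) hα
  set D : Matrix (Fin n) (Fin n) ℂ := diagonal (fun i => ((t * lam i + α : ℝ) : ℂ)) with hD
  set D' : Matrix (Fin n) (Fin n) ℂ := diagonal (fun i => (((t * lam i + α : ℝ) : ℂ))⁻¹) with hD'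
  have hdiag : t • diagonal (RCLike.ofReal ∘ lam) + α • (1 : Matrix (Fin n) (Fin n) ℂ) = D := by
    ext i j
    rcases eq_or_ne i j with h | h
    · subst h
      simp [hD, Matrix.diagonal_apply_eq, Matrix.one_apply_eq, Function.comp]
    · simp [hD, Matrix.diagonal_apply_ne _ h, Matrix.one_apply_ne h]
  have hA : t • R + α • (1 : Matrix (Fin n) (Fin n) ℂ) = U * D * star U := by
    rw [hspec, ← hdiag]
    simp only [Matrix.mul_add, Matrix.add_mul, Matrix.mul_smul, Matrix.smul_mul, mul_one, hUU]
  have hDD' : D * D' = 1 := by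
    have hfun : (fun i => (((t * lam i + α : ℝ) : ℂ) * ((( t * lam i + α : ℝ) : ℂ))⁻¹)) = fun _ => (1:ℂ) :=
      funext fun i => mul_inv_cancel₀ (by exact_mod_cast (hden i).ne')
    rw [hD, hD', Matrix.diagonal_mul_diagonal, hfun, Matrix.diagonal_one]
  have hinv : (t • R + α • (1 : Matrix (Fin n) (Fin n) ℂ))⁻¹ = U * D' * star U := by
    apply Matrix.inv_eq_right_inv
    rw [hA]
    simp only [Matrix.mul_assoc]
    rw [← Matrix.mul_assoc (star U) U (D' * star U), hUU', one_mul,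
      ← Matrix.mul_assoc D D' (star U), hDD', one_mul, hUU]
  rw [hinv, hspec]
  have hmul : U * diagonal (RCLike.ofReal ∘ lam) * star U * (U * D' * star U)
      = U * (diagonal (RCLike.ofReal ∘ lam) * D') * star U := by
    simp only [Matrix.mul_assoc]
    rw [← Matrix.mul_assoc (star U) U (D' * star U), hUU', one_mul]
  rw [hmul, Matrix.trace_mul_cycle, ← Matrix.mul_assoc, hUU', one_mul, hD',
    Matrix.diagonal_mul_diagonal, Matrix.trace_diagonal]
  push_cast
  rfl

theorem scalar_fixed_point (n : ℕ) (hn : 0 < n) (lam : Fin n → ℝ)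
    (hlam : ∀ i, 0 ≤ lam i) (α c : ℝ) (hα : 0 < α) (hc : 0 < c) :
    ∃! δ : ℝ, 0 ≤ δ ∧
      δ = (1 / (n : ℝ)) * ∑ i, lam i * ((c / (1 + δ)) * lam i + α)⁻¹ := by
  have hN : (0:ℝ) < n := Nat.cast_pos.mpr hn
  set N : ℝ := (n : ℝ) with hNdef
  set F : ℝ → ℝ := fun δ => (1 / N) * ∑ i, lam i * ((c / (1 + δ)) * lam i + α)⁻¹ with hF
  set S : ℝ → ℝ := fun δ => ∑ i, lam i / (c * lam i + α * (1 + δ)) with hS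
  have h1δ : ∀ δ : ℝ, 0 ≤ δ → (0:ℝ) < 1 + δ := fun δ hδ => by linarith
  have hden : ∀ (δ : ℝ), 0 ≤ δ → ∀ i, (0:ℝ) < c * lam i + α * (1 + δ) := by
    intro δ hδ i
    have := hlam i
    nlinarith [h1δ δ hδ]
  have hden2 : ∀ (δ : ℝ), 0 ≤ δ → ∀ i, (0:ℝ) < (c / (1 + δ)) * lam i + α := by
    intro δ hδ i
    have ht : 0 ≤ c / (1 + δ) := div_nonneg hc.le (h1δ δ hδ).le
    nlinarith [hlam i]
  -- F δ = (1/N) * (1+δ) * S δ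
  have hterm : ∀ δ : ℝ, 0 ≤ δ → ∀ i, lam i * ((c / (1 + δ)) * lam i + α)⁻¹
      = (1 + δ) * (lam i / (c * lam i + α * (1 + δ))) := by
    intro δ hδ i
    have h1 := h1δ δ hδ
    have h2 := hden δ hδ i
    have h3 := hden2 δ hδ i
    field_simp
  have hFS : ∀ δ : ℝ, 0 ≤ δ → F δ = (1 / N) * ((1 + δ) * S δ) := by
    intro δ hδ
    simp only [hF, hS]
    rw [Finset.sum_congr rfl (fun i _ => hterm δ hδ i), ← Finset.mul_sum]
  -- monotonicity of S
  have hSmono : ∀ a b : ℝ, 0 ≤ a → a ≤ b → S b ≤ S a := by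
    intro a b ha hab
    apply Finset.sum_le_sum
    intro i _
    have h2 := hden a ha i
    have hab' : c * lam i + α * (1 + a) ≤ c * lam i + α * (1 + b) := by nlinarith
    exact div_le_div_of_nonneg_left (hlam i) h2 hab' |>.trans_eq rfl
  -- nonnegativity of S
  have hSnn : ∀ δ : ℝ, 0 ≤ δ → 0 ≤ S δ := by
    intro δ hδ
    apply Finset.sum_nonneg
    intro i _
    exact div_nonneg (hlam i) (hden δ hδ i).le
  -- bounds on F
  set M : ℝ := (1 / N) * ∑ i, lam i / α with hM
  have hM0 : 0 ≤ M := by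
    apply mul_nonneg (by positivity)
    exact Finset.sum_nonneg fun i _ => div_nonneg (hlam i) hα.le
  have hF0 : ∀ δ : ℝ, 0 ≤ δ → 0 ≤ F δ := by
    intro δ hδ
    apply mul_nonneg (by positivity)
    exact Finset.sum_nonneg fun i _ => mul_nonneg (hlam i) (inv_nonneg.mpr (hden2 δ hδ i).le)
  have hFM : ∀ δ : ℝ, 0 ≤ δ → F δ ≤ M := by
    intro δ hδ
    rw [hF, hM]
    apply mul_le_mul_of_nonneg_left _ (by positivity)
    apply Finset.sum_le_sum
    intro i _
    rw [div_eq_mul_inv]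
    apply mul_le_mul_of_nonneg_left _ (hlam i)
    have ht : 0 ≤ c / (1 + δ) * lam i := mul_nonneg (div_nonneg hc.le (h1δ δ hδ).le) (hlam i)
    exact inv_anti₀ hα (le_add_of_nonneg_left ht)
  -- continuity of F on [0, ∞)
  have hFc : ContinuousOn F (Set.Ici 0) := by
    apply ContinuousOn.mul continuousOn_const
    apply continuousOn_finset_sum
    intro i _
    apply ContinuousOn.mul continuousOn_const
    apply ContinuousOn.inv₀
    · apply ContinuousOn.add _ continuousOn_const
      apply ContinuousOn.mul _ continuousOn_const
      exact continuousOn_const.div ((continuous_const.add continuous_id).continuousOn)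
        (fun δ hδ => (h1δ δ hδ).ne')
    · intro δ hδ
      exact (hden2 δ hδ i).ne'
  -- existence via IVT
  have hivt : ∃ δ0 ∈ Set.Icc (0:ℝ) M, F δ0 - δ0 = 0 := by
    have hcont : ContinuousOn (fun δ => F δ - δ) (Set.Icc 0 M) :=
      (hFc.mono Set.Icc_subset_Ici_self).sub continuousOn_id
    have hsub := intermediate_value_Icc' hM0 hcont
    have hmem : (0:ℝ) ∈ Set.Icc (F M - M) (F 0 - 0) := by
      constructor
      · simp only [sub_nonpos]
        linarith [hFM M hM0]
      · simp only [sub_zero]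
        exact hF0 0 le_rfl
    obtain ⟨δ0, hδ0, heq⟩ := hsub hmem
    exact ⟨δ0, hδ0, heq⟩
  obtain ⟨δ0, hδ0mem, hδ0eq⟩ := hivt
  -- uniqueness core
  have huniq : ∀ a b : ℝ, 0 ≤ a → 0 ≤ b → a = F a → b = F b → a ≤ b → b ≤ a := by
    intro a b ha hb hfa hfb hab
    have hNa : N * a = (1 + a) * S a := by
      have := hFS a ha
      rw [this] at hfa
      field_simp at hfa
      linarith [hfa]
    have hNb : N * b = (1 + b) * S b := by
      have := hFS b hb
      rw [this] at hfb
      field_simp at hfb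
      linarith [hfb]
    have hS2 : S b ≤ S a := hSmono a b ha hab
    have h1a := h1δ a ha
    have h1b := h1δ b hb
    have hkey : N * b * (1 + a) ≤ N * a * (1 + b) := by
      calc N * b * (1 + a) = (1 + a) * ((1 + b) * S b) := by linear_combination (1 + a) * hNb
        _ ≤ (1 + a) * ((1 + b) * S a) :=
            mul_le_mul_of_nonneg_left (mul_le_mul_of_nonneg_left hS2 h1b.le) h1a.le
        _ = N * a * (1 + b) := by linear_combination -(1 + b) * hNa
    nlinarith [hkey]
  have hδ0F : δ0 = F δ0 := (sub_eq_zero.mp hδ0eq).symm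
  refine ⟨δ0, ⟨hδ0mem.1, hδ0F⟩, ?_⟩
  rintro y ⟨hy0, hyeq⟩
  have hyF : y = F y := hyeq
  rcases le_total y δ0 with h | h
  · exact le_antisymm h (huniq y δ0 hy0 hδ0mem.1 hyF hδ0F h)
  · exact le_antisymm (huniq δ0 y hδ0mem.1 hy0 hδ0F hyF h) h

/-- Existence and uniqueness of the deterministic-equivalent fixed point
δ = (1/n)·tr(R·((c/(1+δ))·R + α·I)⁻¹) for Hermitian PSD R and α, c > 0. -/
theorem stmt_9 (n : ℕ) (hn : 0 < n) (R : Matrix (Fin n) (Fin n) ℂ)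
    (hR : R.PosSemidef) (α c : ℝ) (hα : 0 < α) (hc : 0 < c) :
    ∃! δ : ℝ, 0 ≤ δ ∧
      δ = (1 / (n : ℝ)) *
        ((R * ((c / (1 + δ)) • R + α • (1 : Matrix (Fin n) (Fin n) ℂ))⁻¹).trace).re := by
  obtain ⟨δ, ⟨hδ0, hδeq⟩, huniq⟩ :=
    scalar_fixed_point n hn hR.1.eigenvalues (fun i => hR.eigenvalues_nonneg i) α c hα hc
  have hre : ∀ d : ℝ, 0 ≤ d →
      ((R * ((c / (1 + d)) • R + α • (1 : Matrix (Fin n) (Fin n) ℂ))⁻¹).trace).re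
        = ∑ i, hR.1.eigenvalues i * ((c / (1 + d)) * hR.1.eigenvalues i + α)⁻¹ := by
    intro d hd
    rw [trace_formula n R hR (c / (1 + d)) α (div_nonneg hc.le (by linarith)) hα,
      ← Complex.ofReal_sum, Complex.ofReal_re]
  refine ⟨δ, ⟨hδ0, by rw [hre δ hδ0]; exact hδeq⟩, ?_⟩
  rintro y ⟨hy0, hyeq⟩
  exact huniq y ⟨hy0, by rw [← hre y hy0]; exact hyeq⟩
end

section
/- Let n be a positive integer, R an n×n Hermitian positive semidefinite complex matrix with R ≠ 0, and α > 0, c > 0 real numbers. For δ ≥ 0 define f(δ) = (1/n)·tr(R·((c/(1+δ))·R + α·I_n)⁻¹), where the matrix (c/(1+δ))·R + α·I_n is positive definite, hence invertible. Then for every δ ≥ 0 and every λ > 1, f(λ·δ) < λ·f(δ). -/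
open Matrix ComplexOrder

/-!
Diagonalising `R` in an eigenbasis, `f(δ) = (1/n) ∑ᵢ μᵢ / (t μᵢ + α)` with `t = c / (1 + δ)` and
`μᵢ ≥ 0` the eigenvalues of `R`. Replacing `δ` by `λδ` turns `t` into some `t'` with `t ≤ λt'`, and
then `μ / (t'μ + α) = λμ / (λt'μ + λα) < λμ / (tμ + α)` for every `μ > 0`, because `α < λα`.
Such a `μ` exists since `R ≠ 0`.
-/

namespace Matrix

variable {n 𝕜 : Type*} [Fintype n] [DecidableEq n] [RCLike 𝕜] {A : Matrix n n 𝕜}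

lemma IsHermitian.trace_cfc (hA : A.IsHermitian) (f : ℝ → ℝ) :
    (cfc f A).trace = ∑ i, (f (hA.eigenvalues i) : 𝕜) := by
  rw [hA.cfc_eq, IsHermitian.cfc, Unitary.conjStarAlgAut_apply, trace_mul_cycle,
    Unitary.coe_star_mul_self, one_mul, trace_diagonal]
  rfl

lemma PosSemidef.nonneg_of_mem_spectrum (hA : A.PosSemidef) {x : ℝ} (hx : x ∈ spectrum ℝ A) :
    0 ≤ x := by
  rw [hA.1.spectrum_real_eq_range_eigenvalues] at hx
  obtain ⟨i, rfl⟩ := hx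
  exact hA.eigenvalues_nonneg i

lemma PosSemidef.exists_eigenvalues_pos (hA : A.PosSemidef) (hA0 : A ≠ 0) :
    ∃ i, 0 < hA.1.eigenvalues i := by
  by_contra! h
  refine hA0 (hA.1.eigenvalues_eq_zero_iff.mp ?_)
  funext i
  exact le_antisymm (h i) (hA.eigenvalues_nonneg i)

lemma PosSemidef.mul_inv_smul_add_smul_one_eq_cfc (hA : A.PosSemidef) {t α : ℝ} (ht : 0 ≤ t)
    (hα : 0 < α) :
    A * (t • A + α • (1 : Matrix n n 𝕜))⁻¹ = cfc (fun x ↦ x / (t * x + α)) A := by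
  have hsa : IsSelfAdjoint A := hA.1
  have hcont (f : ℝ → ℝ) : ContinuousOn f (spectrum ℝ A) := A.finite_real_spectrum.continuousOn f
  have hpos : ∀ x ∈ spectrum ℝ A, 0 < t * x + α := fun x hx ↦ by
    have := hA.nonneg_of_mem_spectrum hx
    positivity
  have hM : t • A + α • (1 : Matrix n n 𝕜) = cfc (fun x ↦ t * x + α) A := by
    rw [cfc_add_const _ _ _ (hcont _), cfc_const_mul_id t A, Algebra.algebraMap_eq_smul_one]
  have hinv : (t • A + α • (1 : Matrix n n 𝕜))⁻¹ = cfc (fun x ↦ (t * x + α)⁻¹) A := by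
    refine inv_eq_right_inv ?_
    rw [hM, ← cfc_mul _ _ _ (hcont _) (hcont _), ← cfc_one ℝ A]
    exact cfc_congr fun x hx ↦ mul_inv_cancel₀ (hpos x hx).ne'
  nth_rw 1 [hinv, ← cfc_id' ℝ A]
  rw [← cfc_mul _ _ _ (hcont _) (hcont _)]
  rfl

lemma PosSemidef.re_trace_mul_inv_smul_add_smul_one (hA : A.PosSemidef) {t α : ℝ} (ht : 0 ≤ t)
    (hα : 0 < α) :
    RCLike.re (A * (t • A + α • (1 : Matrix n n 𝕜))⁻¹).trace =
      ∑ i, hA.1.eigenvalues i / (t * hA.1.eigenvalues i + α) := by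
  simp only [hA.mul_inv_smul_add_smul_one_eq_cfc ht hα, hA.1.trace_cfc, map_sum, RCLike.ofReal_re]

end Matrix

lemma div_mul_add_lt_mul_div_mul_add {x t t' α lam : ℝ} (hx : 0 < x) (ht : 0 ≤ t) (hα : 0 < α)
    (hlam : 1 < lam) (htt' : t ≤ lam * t') :
    x / (t' * x + α) < lam * (x / (t * x + α)) := by
  have ht' : 0 ≤ t' := nonneg_of_mul_nonneg_right (ht.trans htt') (by linarith)
  rw [mul_div_assoc', div_lt_div_iff₀ (by positivity) (by positivity)]
  nlinarith [mul_le_mul_of_nonneg_right htt' (mul_pos hx hx).le,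
    mul_lt_mul_of_pos_right hlam (mul_pos hx hα)]

lemma sum_div_mul_add_lt_mul_sum {ι : Type*} [Fintype ι] {μ : ι → ℝ} (hμ : ∀ i, 0 ≤ μ i)
    (hμ_pos : ∃ i, 0 < μ i) {t t' α lam : ℝ} (ht : 0 ≤ t) (hα : 0 < α) (hlam : 1 < lam)
    (htt' : t ≤ lam * t') :
    ∑ i, μ i / (t' * μ i + α) < lam * ∑ i, μ i / (t * μ i + α) := by
  rw [Finset.mul_sum]
  obtain ⟨i₀, hi₀⟩ := hμ_pos
  refine Finset.sum_lt_sum (fun i _ ↦ ?_) ⟨i₀, Finset.mem_univ _,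
    div_mul_add_lt_mul_div_mul_add hi₀ ht hα hlam htt'⟩
  rcases (hμ i).eq_or_lt with h | h
  · simp [← h]
  · exact (div_mul_add_lt_mul_div_mul_add h ht hα hlam htt').le

theorem stmt_11_general (n : ℕ) (R : Matrix (Fin n) (Fin n) ℂ)
    (hR : R.PosSemidef) (hR0 : R ≠ 0) (α c : ℝ) (hα : 0 < α) (hc : 0 < c) :
    ∀ δ : ℝ, 0 ≤ δ → ∀ lam : ℝ, 1 < lam →
      (1 / (n : ℝ)) *
          ((R * ((c / (1 + lam * δ)) • R + α • (1 : Matrix (Fin n) (Fin n) ℂ))⁻¹).trace).re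
        < lam * ((1 / (n : ℝ)) *
            ((R * ((c / (1 + δ)) • R + α • (1 : Matrix (Fin n) (Fin n) ℂ))⁻¹).trace).re) := by
  intro δ hδ lam hlam
  obtain ⟨i₀, hi₀⟩ := hR.exists_eigenvalues_pos hR0
  have hn : (0 : ℝ) < n := Nat.cast_pos.mpr i₀.pos
  have hδ' : 0 < 1 + lam * δ := by nlinarith
  have htt' : c / (1 + δ) ≤ lam * (c / (1 + lam * δ)) := by
    rw [mul_div_assoc', div_le_div_iff₀ (by positivity) hδ']
    nlinarith
  have hf (t : ℝ) (ht : 0 ≤ t) := RCLike.re_to_complex ▸ hR.re_trace_mul_inv_smul_add_smul_one ht hα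
  rw [hf _ (div_nonneg hc.le hδ'.le), hf _ (by positivity), mul_left_comm]
  exact mul_lt_mul_of_pos_left (sum_div_mul_add_lt_mul_sum hR.eigenvalues_nonneg ⟨i₀, hi₀⟩
    (by positivity) hα hlam htt') (by positivity)

/-- Strict scalability of the fixed-point map: for R Hermitian PSD, R ≠ 0,
α, c > 0, the map f(δ) = (1/n)·tr(R·((c/(1+δ))·R + α·I)⁻¹) satisfies
f(λ·δ) < λ·f(δ) for all δ ≥ 0 and λ > 1. -/
theorem stmt_11 (n : ℕ) (hn : 0 < n) (R : Matrix (Fin n) (Fin n) ℂ)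
    (hR : R.PosSemidef) (hR0 : R ≠ 0) (α c : ℝ) (hα : 0 < α) (hc : 0 < c) :
    ∀ δ : ℝ, 0 ≤ δ → ∀ lam : ℝ, 1 < lam →
      (1 / (n : ℝ)) *
          ((R * ((c / (1 + lam * δ)) • R + α • (1 : Matrix (Fin n) (Fin n) ℂ))⁻¹).trace).re
        < lam * ((1 / (n : ℝ)) *
            ((R * ((c / (1 + δ)) • R + α • (1 : Matrix (Fin n) (Fin n) ℂ))⁻¹).trace).re) :=
  stmt_11_general n R hR hR0 α c hα hc
end

section
/- Let n be a positive integer, R an n×n Hermitian positive semidefinite complex matrix, and α > 0, c > 0 real numbers. For δ ≥ 0 define f(δ) = (1/n)·tr(R·((c/(1+δ))·R + α·I_n)⁻¹), where the matrix (c/(1+δ))·R + α·I_n is positive definite, hence invertible. Then f is monotone nondecreasing on [0, ∞): if 0 ≤ δ₁ ≤ δ₂ then f(δ₁) ≤ f(δ₂). -/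
open Matrix ComplexOrder

lemma aux_trace_re (n : ℕ) (R : Matrix (Fin n) (Fin n) ℂ) (hR : R.PosSemidef)
    (α s : ℝ) (hα : 0 < α) (hs : 0 ≤ s) :
    ((R * (s • R + α • (1 : Matrix (Fin n) (Fin n) ℂ))⁻¹).trace).re
      = ∑ i, hR.1.eigenvalues i / (s * hR.1.eigenvalues i + α) := by
  have hH := hR.1
  set lam := hH.eigenvalues with hlam
  set U : Matrix (Fin n) (Fin n) ℂ := ((hH.eigenvectorUnitary : Matrix (Fin n) (Fin n) ℂ)) with hUdef
  have hUU : U * Uᴴ = 1 := Matrix.mem_unitaryGroup_iff.mp (hH.eigenvectorUnitary).2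
  have hUU' : Uᴴ * U = 1 := Matrix.mem_unitaryGroup_iff'.mp (hH.eigenvectorUnitary).2
  have hspec : R = U * diagonal (Complex.ofReal ∘ lam) * Uᴴ := hH.spectral_theorem
  have hden : ∀ i, 0 < s * lam i + α := fun i =>
    add_pos_of_nonneg_of_pos (mul_nonneg hs (hR.eigenvalues_nonneg i)) hα
  set d : Fin n → ℂ := fun i => ((s * lam i + α : ℝ) : ℂ) with hd
  have hdne : ∀ i, d i ≠ 0 := fun i =>
    Complex.ofReal_ne_zero.mpr (hden i).ne'
  -- M = U * diagonal d * Uᴴ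
  have hM : s • R + α • (1 : Matrix (Fin n) (Fin n) ℂ) = U * diagonal d * Uᴴ := by
    have hdiag : diagonal d
        = s • diagonal (Complex.ofReal ∘ lam) + α • (1 : Matrix (Fin n) (Fin n) ℂ) := by
      ext i j
      by_cases h : i = j
      · subst h
        simp [hd, diagonal, Complex.real_smul]
      · simp [hd, diagonal_apply_ne _ h, Matrix.one_apply_ne h]
    rw [hspec, hdiag, Matrix.mul_add, Matrix.add_mul, Matrix.mul_smul, Matrix.smul_mul,
      Matrix.mul_smul, Matrix.smul_mul, Matrix.mul_one, hUU]
  have hMinv : (s • R + α • (1 : Matrix (Fin n) (Fin n) ℂ))⁻¹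
      = U * diagonal (fun i => (d i)⁻¹) * Uᴴ := by
    apply Matrix.inv_eq_right_inv
    rw [hM]
    calc U * diagonal d * Uᴴ * (U * diagonal (fun i => (d i)⁻¹) * Uᴴ)
        = U * diagonal d * (Uᴴ * U) * diagonal (fun i => (d i)⁻¹) * Uᴴ := by
          simp only [Matrix.mul_assoc]
      _ = U * (diagonal d * diagonal (fun i => (d i)⁻¹)) * Uᴴ := by
          rw [hUU']; simp only [Matrix.mul_one, Matrix.mul_assoc]
      _ = 1 := by
          rw [diagonal_mul_diagonal]
          have : (fun i => d i * (d i)⁻¹) = fun _ => (1 : ℂ) := by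
            funext i; exact mul_inv_cancel₀ (hdne i)
          rw [this, diagonal_one, Matrix.mul_one, hUU]
  have htr : (R * (s • R + α • (1 : Matrix (Fin n) (Fin n) ℂ))⁻¹).trace
      = ∑ i, (lam i : ℂ) * (d i)⁻¹ := by
    rw [hMinv]
    nth_rewrite 1 [hspec]
    have : U * diagonal (Complex.ofReal ∘ lam) * Uᴴ * (U * diagonal (fun i => (d i)⁻¹) * Uᴴ)
        = U * (diagonal (Complex.ofReal ∘ lam) * diagonal (fun i => (d i)⁻¹)) * Uᴴ := by
      calc U * diagonal (Complex.ofReal ∘ lam) * Uᴴ * (U * diagonal (fun i => (d i)⁻¹) * Uᴴ)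
          = U * diagonal (Complex.ofReal ∘ lam) * (Uᴴ * U) * diagonal (fun i => (d i)⁻¹) * Uᴴ := by
            simp only [Matrix.mul_assoc]
        _ = _ := by rw [hUU']; simp only [Matrix.mul_one, Matrix.mul_assoc]
    rw [this, Matrix.trace_mul_cycle, ← Matrix.mul_assoc, hUU', Matrix.one_mul,
      diagonal_mul_diagonal, trace_diagonal]
    simp [Function.comp]
  rw [htr]
  have : ∀ i, (lam i : ℂ) * (d i)⁻¹ = ((lam i / (s * lam i + α) : ℝ) : ℂ) := by
    intro i; rw [hd]; push_cast; ring
  rw [Finset.sum_congr rfl (fun i _ => this i), ← Complex.ofReal_sum, Complex.ofReal_re]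

/-- Monotonicity of the fixed-point map: for R Hermitian PSD and α, c > 0,
f(δ) = (1/n)·tr(R·((c/(1+δ))·R + α·I)⁻¹) is nondecreasing on [0, ∞). -/
theorem stmt_12 (n : ℕ) (hn : 0 < n) (R : Matrix (Fin n) (Fin n) ℂ)
    (hR : R.PosSemidef) (α c : ℝ) (hα : 0 < α) (hc : 0 < c) :
    ∀ δ₁ δ₂ : ℝ, 0 ≤ δ₁ → δ₁ ≤ δ₂ →
      (1 / (n : ℝ)) *
          ((R * ((c / (1 + δ₁)) • R + α • (1 : Matrix (Fin n) (Fin n) ℂ))⁻¹).trace).re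
        ≤ (1 / (n : ℝ)) *
          ((R * ((c / (1 + δ₂)) • R + α • (1 : Matrix (Fin n) (Fin n) ℂ))⁻¹).trace).re := by
  intro δ₁ δ₂ hδ₁ h12
  have h1 : (0:ℝ) < 1 + δ₁ := by linarith
  have h2 : (0:ℝ) < 1 + δ₂ := by linarith
  have hs₁ : 0 < c / (1 + δ₁) := div_pos hc h1
  have hs₂ : 0 < c / (1 + δ₂) := div_pos hc h2
  have hss : c / (1 + δ₂) ≤ c / (1 + δ₁) :=
    div_le_div_of_nonneg_left hc.le h1 (by linarith)
  rw [aux_trace_re n R hR α _ hα hs₁.le, aux_trace_re n R hR α _ hα hs₂.le]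
  apply mul_le_mul_of_nonneg_left _ (by positivity)
  apply Finset.sum_le_sum
  intro i _
  have hev := hR.eigenvalues_nonneg i
  have hden₂ : 0 < c / (1 + δ₂) * hR.1.eigenvalues i + α :=
    add_pos_of_nonneg_of_pos (mul_nonneg hs₂.le hev) hα
  refine div_le_div_of_nonneg_left hev hden₂ ?_
  have := mul_le_mul_of_nonneg_right hss hev
  linarith
end
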